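/- arXiv:2103.13404 — 3 statements merged into one kernel-verified Lean document; each statement's English description precedes it below -/
import Mathlib

section
/- In a subsystem code, if a region R is correctable with respect to a logical subsystem choice, then every dressed codespace-preserving operator supported on R implements a logical operation of the form Id_L ⊗ A_J (i.e., acts as the identity on the logical factor). -/
open TensorProduct

/-- An endomorphism of a nontrivial vector space commuting with all
endomorphisms is a scalar multiple of the identity. -/
lemma central_end_is_smul_id {V : Type*} [AddCommGroup V] [Module ℂ V] [Nontrivial V]
    (f : Module.End ℂ V) (h : ∀ g : Module.End ℂ V, f * g = g * f) :
    ∃ c : ℂ, f = c • (LinearMap.id : Module.End ℂ V) := by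
  obtain ⟨v, hv⟩ := exists_ne (0 : V)
  obtain ⟨φ, hφ⟩ : ∃ φ : Module.Dual ℂ V, φ v ≠ 0 := by
    by_contra hc
    push_neg at hc
    exact hv ((Module.forall_dual_apply_eq_zero_iff ℂ v).mp hc)
  set ψ : Module.Dual ℂ V := (φ v)⁻¹ • φ with hψdef
  have hψv : ψ v = 1 := by
    simp [hψdef, inv_mul_cancel₀ hφ]
  refine ⟨ψ (f v), ?_⟩
  ext w
  have := congrArg (fun g => g v) (h (LinearMap.smulRight ψ w))
  simp only [Module.End.mul_apply, LinearMap.smulRight_apply, hψv, one_smul,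
    map_smul] at this
  simp only [this, LinearMap.smul_apply, LinearMap.id_coe, id_eq]

/-- If `TensorProduct.map C D = 0` with `D ≠ 0` (vector spaces over ℂ), then `C = 0`. -/
lemma map_eq_zero_left {V W : Type*} [AddCommGroup V] [Module ℂ V]
    [AddCommGroup W] [Module ℂ W]
    (C : Module.End ℂ V) (D : Module.End ℂ W) (hD : D ≠ 0)
    (h : TensorProduct.map C D = 0) : C = 0 := by
  obtain ⟨y, hy⟩ : ∃ y, D y ≠ 0 := by
    by_contra hc
    push_neg at hc
    exact hD (LinearMap.ext fun y => hc y)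
  obtain ⟨φ, hφ⟩ : ∃ φ : Module.Dual ℂ W, φ (D y) ≠ 0 := by
    by_contra hc
    push_neg at hc
    exact hy ((Module.forall_dual_apply_eq_zero_iff ℂ (D y)).mp hc)
  ext x
  have h0 := LinearMap.congr_fun h (x ⊗ₜ[ℂ] y)
  rw [TensorProduct.map_tmul, LinearMap.zero_apply] at h0
  have h1 : φ (D y) • C x = 0 := by
    have := congrArg (fun z => (TensorProduct.rid ℂ V)
      ((TensorProduct.map (LinearMap.id : V →ₗ[ℂ] V) φ) z)) h0
    simpa using this
  have := smul_eq_zero.mp h1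
  rcases this with h2 | h2
  · exact absurd h2 hφ
  · simpa using h2

/-- In a subsystem code, if a region R is correctable, then every dressed
codespace-preserving operator supported on R acts as (a scalar multiple of)
the identity on the logical factor, i.e. implements Id_L ⊗ A_J. -/
theorem dressed_csp_on_correctable_is_logically_trivial
    {HL HJ HP : Type*} [AddCommGroup HL] [Module ℂ HL] [Nontrivial HL]
    [AddCommGroup HJ] [Module ℂ HJ] [AddCommGroup HP] [Module ℂ HP]
    (suppR suppRc : Module.End ℂ HP → Prop)
    (logic : Module.End ℂ HP → Module.End ℂ (HL ⊗[ℂ] HJ))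
    -- operators with disjoint supports commute
    (hcomm : ∀ A B, suppR A → suppRc B → A * B = B * A)
    -- the logical action is multiplicative for codespace-preserving operators
    (hmul : ∀ A B, suppR A → suppRc B →
      logic (A * B) = logic A * logic B ∧ logic (B * A) = logic B * logic A)
    -- correctability of R: every bare logical operator is implementable on Rᶜ
    (hcorr : ∀ B_L : Module.End ℂ HL,
      ∃ B, suppRc B ∧ logic B = TensorProduct.map B_L LinearMap.id)
    -- A is a dressed codespace-preserving operator supported on R
    (A : Module.End ℂ HP) (hA : suppR A)
    (A_L : Module.End ℂ HL) (A_J : Module.End ℂ HJ) (hAJ : A_J ≠ 0)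
    (hlog : logic A = TensorProduct.map A_L A_J) :
    ∃ c : ℂ, A_L = c • (LinearMap.id : Module.End ℂ HL) := by
  apply central_end_is_smul_id
  intro B_L
  obtain ⟨B, hBsupp, hBlog⟩ := hcorr B_L
  obtain ⟨h1, h2⟩ := hmul A B hA hBsupp
  have hAB : A * B = B * A := hcomm A B hA hBsupp
  have key : logic A * logic B = logic B * logic A := by
    rw [← h1, ← h2, hAB]
  rw [hlog, hBlog] at key
  have key2 : TensorProduct.map (A_L * B_L) A_J = TensorProduct.map (B_L * A_L) A_J := by
    calc TensorProduct.map (A_L * B_L) A_J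
        = TensorProduct.map (A_L ∘ₗ B_L) (A_J ∘ₗ LinearMap.id) := by
          rw [LinearMap.comp_id]; rfl
      _ = TensorProduct.map A_L A_J * TensorProduct.map B_L LinearMap.id := by
          rw [TensorProduct.map_comp]; rfl
      _ = TensorProduct.map B_L LinearMap.id * TensorProduct.map A_L A_J := key
      _ = TensorProduct.map (B_L ∘ₗ A_L) (LinearMap.id ∘ₗ A_J) := by
          rw [TensorProduct.map_comp]; rfl
      _ = TensorProduct.map (B_L * A_L) A_J := by rw [LinearMap.id_comp]; rfl
  have hsum : TensorProduct.map (A_L * B_L - B_L * A_L) A_J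
      + TensorProduct.map (B_L * A_L) A_J = TensorProduct.map (A_L * B_L) A_J := by
    rw [← TensorProduct.map_add_left, sub_add_cancel]
  rw [key2] at hsum
  have hzero : TensorProduct.map (A_L * B_L - B_L * A_L) A_J = 0 :=
    add_eq_right.mp hsum
  have := map_eq_zero_left (A_L * B_L - B_L * A_L) A_J hAJ hzero
  have : A_L * B_L = B_L * A_L := by
    have h := sub_eq_zero.mp this
    exact h
  exact this
end

section
/- In a subsystem code with encoded space decomposed into local subsystems indexed by {1,…,n}, if a physical region R is correctable with respect to logical subsystem choices S₁ and S₂ (subsets of {1,…,n}), then R is correctable with respect to S₁ ∪ S₂. -/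
/-- Correctability of a region is preserved under unions of logical subsystems:
if every operator supported on S₁, and every operator supported on S₂, is
implementable by a codespace-preserving operator on Rᶜ (a subalgebra of
implementable operators), then so is every operator supported on S₁ ∪ S₂. -/
theorem correctable_union {n : ℕ} {Ops : Type*} [Ring Ops] [Algebra ℂ Ops]
    -- operators acting only on the logical subsystems in a subset S
    (supp : Set (Fin n) → Submodule ℂ Ops)
    -- operators implementable by codespace-preserving operators on Rᶜ
    (impl : Subalgebra ℂ Ops)
    -- any operator supported on S₁ ∪ S₂ is a linear combination of products
    -- of an operator supported on S₁ and one supported on S₂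
    (hspan : ∀ S₁ S₂ : Set (Fin n),
      (supp (S₁ ∪ S₂) : Set Ops) ⊆
        Submodule.span ℂ {x | ∃ a ∈ supp S₁, ∃ b ∈ supp S₂, x = a * b})
    (S₁ S₂ : Set (Fin n))
    (h₁ : (supp S₁ : Set Ops) ⊆ impl)
    (h₂ : (supp S₂ : Set Ops) ⊆ impl) :
    (supp (S₁ ∪ S₂) : Set Ops) ⊆ impl := by
  intro x hx
  have hx' := hspan S₁ S₂ hx
  have hsub : Submodule.span ℂ {x : Ops | ∃ a ∈ supp S₁, ∃ b ∈ supp S₂, x = a * b}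
      ≤ (Subalgebra.toSubmodule impl) := by
    rw [Submodule.span_le]
    rintro y ⟨a, ha, b, hb, rfl⟩
    exact impl.mul_mem (h₁ ha) (h₂ hb)
  exact hsub hx'
end

section
/- Let correctability be a downward-closed property on subsets of a finite set B of size N (subsets of correctable regions are correctable), with distance d = min{|R| : R not correctable} and price p = min{|R| : R^c correctable}. If 2 ≤ p ≤ 2d − 2, then B can be partitioned into three pairwise disjoint regions R₀, R₁, R₂ with R₀, R₁, R₂ all correctable (indeed R₀ = R^c for some R realizing the price, and R₁, R₂ a partition of R into nonempty pieces each of size ≤ d − 1). -/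
/-!
Take a region `R` of size `p` realizing the price, so that `Rᶜ` is correctable, and cut it into
two halves of sizes `⌊p/2⌋` and `⌈p/2⌉`. Since `2 ≤ p ≤ 2d - 2`, both halves are nonempty and
smaller than `d`, hence correctable by the minimality of `d`.
-/

namespace Finset

variable {B : Type*}

theorem of_card_lt_sInf_card_not {P : Finset B → Prop} {S : Finset B}
    (hS : S.card < sInf {k | ∃ R : Finset B, R.card = k ∧ ¬ P R}) : P S := by
  by_contra hPS
  have hle : sInf {k | ∃ R : Finset B, R.card = k ∧ ¬ P R} ≤ S.card := Nat.sInf_le ⟨S, rfl, hPS⟩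
  exact hle.not_gt hS

theorem exists_card_eq_sInf_card {P : Finset B → Prop} (hP : ∃ R : Finset B, P R) :
    ∃ R : Finset B, R.card = sInf {k | ∃ R : Finset B, R.card = k ∧ P R} ∧ P R :=
  Nat.sInf_mem (s := {k | ∃ R : Finset B, R.card = k ∧ P R})
    (by obtain ⟨R, hR⟩ := hP; exact ⟨R.card, R, rfl, hR⟩)

theorem exists_disjoint_union_eq_card_half [DecidableEq B] (R : Finset B) :
    ∃ R₁ R₂ : Finset B, Disjoint R₁ R₂ ∧ R₁ ∪ R₂ = R ∧
      R₁.card = R.card / 2 ∧ R₂.card = R.card - R.card / 2 := by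
  obtain ⟨R₁, hR₁, hcard⟩ := R.exists_subset_card_eq (Nat.div_le_self R.card 2)
  exact ⟨R₁, R \ R₁, disjoint_sdiff, union_sdiff_of_subset hR₁, hcard,
    by rw [card_sdiff_of_subset hR₁, hcard]⟩

end Finset

open Finset in
theorem three_correctable_regions_general {B : Type*} [Fintype B] [DecidableEq B]
    (correctable : Finset B → Prop)
    (d p : ℕ)
    (hd : d = sInf {k | ∃ R : Finset B, R.card = k ∧ ¬ correctable R})
    (hp : p = sInf {k | ∃ R : Finset B, R.card = k ∧ correctable Rᶜ})
    (hpne : ∃ R : Finset B, correctable Rᶜ)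
    (h2 : 2 ≤ p) (hpd : p ≤ 2 * d - 2) :
    ∃ R₀ R₁ R₂ : Finset B,
      Disjoint R₀ R₁ ∧ Disjoint R₀ R₂ ∧ Disjoint R₁ R₂ ∧
      R₀ ∪ R₁ ∪ R₂ = Finset.univ ∧
      correctable R₀ ∧ correctable R₁ ∧ correctable R₂ ∧
      R₁.Nonempty ∧ R₂.Nonempty ∧
      R₁.card ≤ d - 1 ∧ R₂.card ≤ d - 1 ∧
      (R₁ ∪ R₂).card = p ∧ R₀ = (R₁ ∪ R₂)ᶜ := by
  obtain ⟨R, hRcard, hRc⟩ := exists_card_eq_sInf_card hpne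
  rw [← hp] at hRcard
  obtain ⟨R₁, R₂, hdisj, rfl, hR₁, hR₂⟩ := R.exists_disjoint_union_eq_card_half
  have hsmall : ∀ S : Finset B, S.card ≤ d - 1 → correctable S := fun S hS =>
    of_card_lt_sInf_card_not (hd ▸ by omega)
  have hR₁d : R₁.card ≤ d - 1 := by omega
  have hR₂d : R₂.card ≤ d - 1 := by omega
  refine ⟨(R₁ ∪ R₂)ᶜ, R₁, R₂, disjoint_compl_left.mono_right subset_union_left,
    disjoint_compl_left.mono_right subset_union_right, hdisj,
    by rw [union_assoc, union_comm, union_compl], hRc, hsmall R₁ hR₁d, hsmall R₂ hR₂d,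
    card_pos.mp (by omega), card_pos.mp (by omega), hR₁d, hR₂d, hRcard, rfl⟩

/-- If correctability is downward closed, with distance d and price p satisfying
2 ≤ p ≤ 2d − 2, then the physical system partitions into three pairwise
disjoint correctable regions (two of them nonempty pieces of a price-realizing
region, each of size ≤ d − 1). -/
theorem three_correctable_regions {B : Type*} [Fintype B] [DecidableEq B]
    (correctable : Finset B → Prop)
    (hdown : ∀ {R R' : Finset B}, R' ⊆ R → correctable R → correctable R')
    (d p : ℕ)
    (hd : d = sInf {k | ∃ R : Finset B, R.card = k ∧ ¬ correctable R})
    (hp : p = sInf {k | ∃ R : Finset B, R.card = k ∧ correctable Rᶜ})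
    (hdne : ∃ R : Finset B, ¬ correctable R)
    (hpne : ∃ R : Finset B, correctable Rᶜ)
    (h2 : 2 ≤ p) (hpd : p ≤ 2 * d - 2) :
    ∃ R₀ R₁ R₂ : Finset B,
      Disjoint R₀ R₁ ∧ Disjoint R₀ R₂ ∧ Disjoint R₁ R₂ ∧
      R₀ ∪ R₁ ∪ R₂ = Finset.univ ∧
      correctable R₀ ∧ correctable R₁ ∧ correctable R₂ ∧
      R₁.Nonempty ∧ R₂.Nonempty ∧
      R₁.card ≤ d - 1 ∧ R₂.card ≤ d - 1 ∧
      (R₁ ∪ R₂).card = p ∧ R₀ = (R₁ ∪ R₂)ᶜ :=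
  three_correctable_regions_general correctable d p hd hp hpne h2 hpd
end
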